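/- arXiv:2007.14185 — 5 statements merged into one kernel-verified Lean document; each statement's English description precedes it below -/
import Mathlib

section
/- Let k be a finite-dimensional Lie algebra, d ≥ 1, and let (f_m)_{1≤m≤d} be algebraically independent invariants in Sym(k). Suppose each f_m decomposes as f_m = c_m ∏_{t=1}^{r_m} f_{m,t}^{s_{m,t}} with c_m ∈ C×, semi-invariants f_{m,t} of weights λ_{m,t}, integers s_{m,t} ≥ 1 which are setwise coprime for each m, such that: (i) for each fixed m, the family (λ_{m,t})_{1≤t≤r_m} has rank r_m − 1 in k*; (ii) the subspaces span((λ_{m,t})_t) for m = 1,…,d are in direct sum. Then the full family (f_{m,t})_{1≤m≤d, 1≤t≤r_m} is algebraically independent over C. -/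
/-!
The factors `F m t` are joint eigenvectors of the derivations `D x`, hence so is every monomial
`∏ p, F p ^ a p`, with weight `∑ p, a p • lam p`; monomials of distinct weights are linearly
independent. Two exponent vectors of the same weight differ, block by block, by a multiple of
`s m`: the direct sum separates the blocks, the rank condition makes `s m` span the linear
relations among the `lam m t`, and coprimality of the `s m t` makes the multiple an integer.
Multiplying by a suitable monomial in the `∏ t, F m t ^ s m t = (c m)⁻¹ • f m` therefore turns a
relation among monomials of one weight into a relation among monomials in the algebraically
independent `f m`.
-/

open MvPolynomial

section JointEigenvectors

variable {K V L : Type*} [Field K] [AddCommGroup V] [Module K V]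

theorem Module.End.iSupIndep_iInf_eigenspace (E : L → Module.End K V) :
    iSupIndep fun μ : L → K => ⨅ x, (E x).eigenspace (μ x) := by
  classical
  rw [iSupIndep_iff_finsetSum_eq_zero_imp_eq_zero]
  intro S
  induction S using Finset.induction_on with
  | empty => simp
  | insert μ₀ S hμ₀ ih =>
    intro v hv hsum
    have heigen : ∀ μ ∈ insert μ₀ S, ∀ x, E x (v μ) = μ x • v μ := fun μ hμ x =>
      mem_eigenspace_iff.mp (Submodule.mem_iInf _ |>.mp (hv μ hμ) x)
    -- `E x - μ₀ x` kills `v μ₀` and rescales the other `v μ` by `μ x - μ₀ x`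
    have hS : ∀ μ ∈ S, v μ = 0 := by
      intro μ hμ
      obtain ⟨x, hx⟩ := Function.ne_iff.mp (ne_of_mem_of_not_mem hμ hμ₀)
      have hshift : ∑ ν ∈ S, (ν x - μ₀ x) • v ν = 0 := calc
        _ = E x (∑ ν ∈ insert μ₀ S, v ν) - μ₀ x • ∑ ν ∈ insert μ₀ S, v ν := by
          rw [map_sum, Finset.sum_insert hμ₀, Finset.sum_insert hμ₀,
            heigen μ₀ (Finset.mem_insert_self _ _), smul_add, Finset.smul_sum,
            Finset.sum_congr rfl fun ν hν => heigen ν (Finset.mem_insert_of_mem hν) x]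
          simp only [sub_smul, Finset.sum_sub_distrib]
          abel
        _ = 0 := by rw [hsum, map_zero, smul_zero, sub_zero]
      have hscaled := ih (fun ν => (ν x - μ₀ x) • v ν)
        (fun ν hν => Submodule.smul_mem _ _ (hv ν (Finset.mem_insert_of_mem hν))) hshift μ hμ
      exact (smul_eq_zero.mp hscaled).resolve_left (sub_ne_zero.mpr hx)
    intro μ hμ
    rcases Finset.mem_insert.mp hμ with rfl | hμ
    · rwa [Finset.sum_insert hμ₀, Finset.sum_eq_zero hS, add_zero] at hsum
    · exact hS μ hμ

theorem linearIndependent_of_linearIndepOn_weight_fibers {ι : Type*}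
    (E : L → Module.End K V) (v : ι → V) (wt : ι → L → K)
    (hv : ∀ i x, E x (v i) = wt i x • v i)
    (hfib : ∀ μ, LinearIndepOn K v {i | wt i = μ}) : LinearIndependent K v := by
  classical
  rw [linearIndependent_iff']
  intro T g hg i hi
  have hfiber : ∀ μ ∈ T.image wt, ∑ j ∈ T with wt j = μ, g j • v j = 0 := by
    refine (iSupIndep_iff_finsetSum_eq_zero_imp_eq_zero _).mp
      (Module.End.iSupIndep_iInf_eigenspace E) _ _ (fun μ _ => ?_) ?_
    · refine Submodule.sum_mem _ fun j hj => Submodule.smul_mem _ _ ?_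
      rw [← (Finset.mem_filter.mp hj).2]
      exact Submodule.mem_iInf _ |>.mpr fun x => Module.End.mem_eigenspace_iff.mpr (hv j x)
    · rwa [Finset.sum_fiberwise_of_maps_to fun j hj => Finset.mem_image_of_mem wt hj]
  exact linearIndepOn_iff'.mp (hfib (wt i)) _ g (fun j hj => (Finset.mem_filter.mp hj).2)
    (hfiber _ (Finset.mem_image_of_mem wt hi)) i (Finset.mem_filter.mpr ⟨hi, rfl⟩)

end JointEigenvectors

theorem Derivation.map_prod_pow_of_map_eq_smul {K R σ : Type*} [CommRing K] [CommRing R]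
    [Algebra K R] (D : Derivation K R R) {G : σ → R} {l : σ → K}
    (hG : ∀ p, D (G p) = l p • G p) (a : σ → ℕ) (S : Finset σ) :
    D (∏ p ∈ S, G p ^ a p) = (∑ p ∈ S, (a p : K) * l p) • ∏ p ∈ S, G p ^ a p := by
  classical
  have hpow : ∀ p, D (G p ^ a p) = ((a p : K) * l p) • G p ^ a p := by
    intro p
    rcases Nat.eq_zero_or_pos (a p) with h | h
    · simp [h]
    · rw [leibniz_pow, hG, ← Nat.cast_smul_eq_nsmul K, smul_comm (G p ^ (a p - 1)) (l p),
        smul_eq_mul, pow_sub_one_mul h.ne', smul_smul]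
  induction S using Finset.induction_on with
  | empty => simp
  | insert p S hp ih =>
    rw [Finset.prod_insert hp, leibniz, ih, hpow, Finset.sum_insert hp]
    simp only [Algebra.smul_def, Algebra.algebraMap_self, RingHom.id_apply, map_add]
    ring

theorem Derivation.sum_mul_eq_zero_of_map_prod_pow_eq_zero {K R τ : Type*} [Field K]
    [CommRing R] [IsDomain R] [Algebra K R] [Fintype τ] (D : Derivation K R R) {F : τ → R}
    (hF : ∀ t, F t ≠ 0) {l : τ → K} (hl : ∀ t, D (F t) = l t • F t) (s : τ → ℕ)
    (h : D (∏ t, F t ^ s t) = 0) : ∑ t, (s t : K) * l t = 0 := by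
  rw [D.map_prod_pow_of_map_eq_smul hl] at h
  exact (smul_eq_zero.mp h).resolve_right
    (Finset.prod_ne_zero_iff.mpr fun t _ => pow_ne_zero _ (hF t))

section Relations

open Module Submodule

variable {K V ι : Type*} [Field K] [AddCommGroup V] [Module K V] [Fintype ι]

theorem Fintype.ker_linearCombination_eq_span_singleton {v : ι → V} {s : ι → K} (hs : s ≠ 0)
    (hsv : ∑ t, s t • v t = 0) (hrank : finrank K (span K (Set.range v)) = Fintype.card ι - 1) :
    LinearMap.ker (Fintype.linearCombination K v) = K ∙ s := by
  have hle : K ∙ s ≤ LinearMap.ker (Fintype.linearCombination K v) := by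
    rw [span_singleton_le_iff_mem, LinearMap.mem_ker, Fintype.linearCombination_apply]
    exact hsv
  refine (eq_of_le_of_finrank_eq hle ?_).symm
  have hcard : 0 < Fintype.card ι := by
    obtain ⟨t, -⟩ := Function.ne_iff.mp hs
    exact Fintype.card_pos_iff.mpr ⟨t⟩
  have hrn := LinearMap.finrank_range_add_finrank_ker (Fintype.linearCombination K v)
  rw [Fintype.range_linearCombination, hrank, finrank_fintype_fun_eq_card] at hrn
  rw [finrank_span_singleton hs]
  omega

theorem Finset.natCast_gcd {α : Type*} (S : Finset α) (s : α → ℕ) :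
    ((S.gcd s : ℕ) : ℤ) = S.gcd fun t => (s t : ℤ) := by
  classical
  induction S using Finset.induction_on with
  | empty => simp
  | insert a S _ ih =>
    rw [Finset.gcd_insert, Finset.gcd_insert, ← ih, ← Int.coe_gcd, Int.gcd_natCast_natCast]
    rfl

theorem exists_intCast_eq_of_forall_mul_natCast {s : ι → ℕ} (hgcd : Finset.univ.gcd s = 1)
    {q : K} (hq : ∀ t, ∃ z : ℤ, q * s t = z) : ∃ z : ℤ, q = z := by
  choose u hu using hq
  obtain ⟨g, hg⟩ := Finset.univ.gcd_eq_sum_mul fun t => (s t : ℤ)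
  rw [← Finset.natCast_gcd, hgcd, Nat.cast_one] at hg
  refine ⟨∑ t, u t * g t, ?_⟩
  calc q = q * ((∑ t, (s t : ℤ) * g t : ℤ) : K) := by rw [← hg, Int.cast_one, mul_one]
    _ = _ := by simp only [Int.cast_sum, Int.cast_mul, Finset.mul_sum, ← mul_assoc, hu,
      Int.cast_natCast]

theorem exists_int_eq_mul_of_sum_smul_eq_zero [CharZero K] {v : ι → V} {s : ι → ℕ}
    (hgcd : Finset.univ.gcd s = 1) (hsv : ∑ t, (s t : K) • v t = 0)
    (hrank : finrank K (span K (Set.range v)) = Fintype.card ι - 1)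
    {u : ι → ℤ} (hu : ∑ t, (u t : K) • v t = 0) : ∃ z : ℤ, ∀ t, u t = z * s t := by
  have hs : (fun t => (s t : K)) ≠ 0 := by
    intro h
    refine one_ne_zero (hgcd.symm.trans (Finset.gcd_eq_zero_iff.mpr fun t _ => ?_))
    simpa using congrFun h t
  have hmem : (fun t => (u t : K)) ∈ K ∙ fun t => (s t : K) := by
    rw [← Fintype.ker_linearCombination_eq_span_singleton hs hsv hrank, LinearMap.mem_ker,
      Fintype.linearCombination_apply]
    exact hu
  obtain ⟨q, hq⟩ := mem_span_singleton.mp hmem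
  have hqt : ∀ t, q * s t = u t := fun t => congrFun hq t
  obtain ⟨z, rfl⟩ := exists_intCast_eq_of_forall_mul_natCast hgcd fun t => ⟨u t, hqt t⟩
  exact ⟨z, fun t => by exact_mod_cast (hqt t).symm⟩

theorem exists_shift_of_sum_smul_eq [CharZero K] {κ : Type*} {τ : κ → Type*} [Fintype κ]
    [∀ m, Fintype (τ m)]
    {lam : ∀ m, τ m → V} {s : ∀ m, τ m → ℕ}
    (hindep : iSupIndep fun m => span K (Set.range (lam m)))
    (hgcd : ∀ m, Finset.univ.gcd (s m) = 1) (hsum : ∀ m, ∑ t, (s m t : K) • lam m t = 0)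
    (hrank : ∀ m, finrank K (span K (Set.range (lam m))) = Fintype.card (τ m) - 1)
    {a a' : (Σ m, τ m) → ℕ} (h : ∑ p, (a p : K) • lam p.1 p.2 = ∑ p, (a' p : K) • lam p.1 p.2) :
    ∃ z : κ → ℤ, ∀ m t, (a ⟨m, t⟩ : ℤ) = a' ⟨m, t⟩ + z m * s m t := by
  let w : κ → V := fun m => ∑ t, (((a ⟨m, t⟩ : ℤ) - a' ⟨m, t⟩ : ℤ) : K) • lam m t
  have hw : ∑ m, w m = 0 := by
    rw [← sub_eq_zero, ← Finset.sum_sub_distrib, ← Finset.univ_sigma_univ, Finset.sum_sigma] at h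
    simpa [w, sub_smul] using h
  have hblock : ∀ m, w m = 0 := fun m =>
    (iSupIndep_iff_finsetSum_eq_zero_imp_eq_zero _).mp hindep Finset.univ w
      (fun m _ => sum_mem fun t _ => smul_mem _ _ (subset_span (Set.mem_range_self t))) hw m
      (Finset.mem_univ m)
  choose z hz using fun m =>
    exists_int_eq_mul_of_sum_smul_eq_zero (hgcd m) (hsum m) (hrank m) (hblock m)
  exact ⟨z, fun m t => by linarith [hz m t]⟩

end Relations

theorem algebraicIndependent_iff_linearIndependent_prod_pow {R A ι : Type*} [CommRing R]
    [CommRing A] [Algebra R A] [Fintype ι] {x : ι → A} :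
    AlgebraicIndependent R x ↔ LinearIndependent R fun a : ι →₀ ℕ => ∏ i, x i ^ a i := by
  have hfam :
      (fun a : ι →₀ ℕ => ∏ i, x i ^ a i) = (aeval x).toLinearMap ∘ basisMonomials ι R := by
    ext a
    simp [aeval_monomial, Finsupp.prod_fintype]
  rw [algebraicIndependent_iff_injective_aeval, hfam,
    linearIndependent_iff_injective_finsuppLinearCombination,
    Finsupp.linearCombination_linear_comp, ← Module.Basis.coe_repr_symm]
  exact (EquivLike.injective_comp (basisMonomials ι R).repr.symm (aeval x)).symm

theorem AlgebraicIndependent.linearIndependent_prod_smul_pow {K A ι : Type*} [Field K]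
    [CommRing A] [Algebra K A] [Fintype ι] {x : ι → A} (hx : AlgebraicIndependent K x)
    {c : ι → K} (hc : ∀ i, c i ≠ 0) :
    LinearIndependent K fun a : ι →₀ ℕ => ∏ i, (c i • x i) ^ a i := by
  have h := (algebraicIndependent_iff_linearIndependent_prod_pow.mp hx).units_smul
    fun a => ∏ i, Units.mk0 (c i) (hc i) ^ a i
  have heq : (fun a : ι →₀ ℕ => ∏ i, (c i • x i) ^ a i) =
      (fun a : ι →₀ ℕ => ∏ i, Units.mk0 (c i) (hc i) ^ a i) • fun a => ∏ i, x i ^ a i := by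
    ext a
    simp [smul_pow, Finset.prod_smul, Units.smul_def]
  rwa [heq]

theorem exists_common_nat_shift {κ : Type*} {τ : κ → Type*} [Fintype κ] {s : ∀ m, τ m → ℕ}
    {T : Finset ((Σ m, τ m) →₀ ℕ)} {b : (Σ m, τ m) →₀ ℕ}
    (hT : ∀ a ∈ T, ∃ z : κ → ℤ, ∀ m t, (a ⟨m, t⟩ : ℤ) = b ⟨m, t⟩ + z m * s m t) :
    ∃ (N : κ → ℕ) (w : ((Σ m, τ m) →₀ ℕ) → κ →₀ ℕ),
      ∀ a ∈ T, ∀ m t, a ⟨m, t⟩ + N m * s m t = b ⟨m, t⟩ + w a m * s m t := by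
  choose! z hz using hT
  let N : κ → ℕ := fun m => T.sup fun a => (z a m).natAbs
  refine ⟨N, fun a => Finsupp.equivFunOnFinite.symm fun m => (z a m + N m).toNat,
    fun a ha m t => ?_⟩
  have hN : (z a m).natAbs ≤ N m := Finset.le_sup (f := fun a => (z a m).natAbs) ha
  have hw : ((z a m + N m).toNat : ℤ) = z a m + N m := by omega
  have hza := hz a ha m t
  simp only [Finsupp.coe_equivFunOnFinite_symm]
  zify
  rw [hw]
  linear_combination hza

theorem prod_prod_pow_pow_eq_prod_sigma {R κ : Type*} {τ : κ → Type*} [CommMonoid R] [Fintype κ]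
    [∀ m, Fintype (τ m)] (F : ∀ m, τ m → R) (s : ∀ m, τ m → ℕ) (n : κ → ℕ) :
    ∏ m, (∏ t, F m t ^ s m t) ^ n m = ∏ p : Σ m, τ m, F p.1 p.2 ^ (n p.1 * s p.1 p.2) := by
  rw [← Finset.univ_sigma_univ, Finset.prod_sigma]
  refine Finset.prod_congr rfl fun m _ => ?_
  rw [← Finset.prod_pow]
  exact Finset.prod_congr rfl fun t _ => by rw [← pow_mul, mul_comm]

theorem linearIndepOn_prod_pow_of_exists_shift {K R κ : Type*} {τ : κ → Type*} [Field K]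
    [CommRing R] [IsDomain R] [Algebra K R] [Fintype κ] [∀ m, Fintype (τ m)]
    {F : ∀ m, τ m → R} (hF : ∀ m t, F m t ≠ 0) {s : ∀ m, τ m → ℕ}
    (hG : LinearIndependent K fun w : κ →₀ ℕ => ∏ m, (∏ t, F m t ^ s m t) ^ w m)
    {A : Set ((Σ m, τ m) →₀ ℕ)}
    (hA : ∀ a ∈ A, ∀ a' ∈ A, ∃ z : κ → ℤ, ∀ m t, (a ⟨m, t⟩ : ℤ) = a' ⟨m, t⟩ + z m * s m t) :
    LinearIndepOn K (fun a => ∏ p, F p.1 p.2 ^ a p) A := by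
  classical
  rw [linearIndepOn_iff']
  intro T g hTA hg i hi
  obtain ⟨N, w, hexp⟩ := exists_common_nat_shift fun a ha => hA a (hTA ha) i (hTA hi)
  set G : κ → R := fun m => ∏ t, F m t ^ s m t
  have hmul : ∀ a ∈ T, (∏ p, F p.1 p.2 ^ a p) * ∏ m, G m ^ N m
      = (∏ p, F p.1 p.2 ^ i p) * ∏ m, G m ^ w a m := by
    intro a ha
    simp only [G, prod_prod_pow_pow_eq_prod_sigma, ← Finset.prod_mul_distrib, ← pow_add]
    exact Finset.prod_congr rfl fun p _ => by rw [hexp a ha p.1 p.2]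
  have hwinj : Set.InjOn w T := by
    intro a ha a' ha' haa'
    ext ⟨m, t⟩
    have h1 := hexp a ha m t
    have h2 := hexp a' ha' m t
    rw [haa'] at h1
    omega
  have hsum : ∑ a ∈ T, g a • ∏ m, G m ^ w a m = 0 := by
    have hprod : (∏ p, F p.1 p.2 ^ i p) * ∑ a ∈ T, g a • ∏ m, G m ^ w a m = 0 := calc
      _ = (∑ a ∈ T, g a • ∏ p, F p.1 p.2 ^ a p) * ∏ m, G m ^ N m := by
        rw [Finset.mul_sum, Finset.sum_mul]
        exact Finset.sum_congr rfl fun a ha => by rw [mul_smul_comm, ← hmul a ha, smul_mul_assoc]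
      _ = 0 := by rw [hg, zero_mul]
    exact (mul_eq_zero.mp hprod).resolve_left
      (Finset.prod_ne_zero_iff.mpr fun p _ => pow_ne_zero _ (hF p.1 p.2))
  exact linearIndepOn_finset_iff.mp ((hG.linearIndepOn _).comp_of_image hwinj) g hsum i hi

theorem algebraically_independent_semiinvariant_factors_general
    {K L ι : Type*} [Field K] [CharZero K]
    [LieRing L] [LieAlgebra K L]
    (D : L → Derivation K (MvPolynomial ι K) (MvPolynomial ι K))
    (d : ℕ) (r : Fin d → ℕ)
    (f : Fin d → MvPolynomial ι K)
    (hfAI : AlgebraicIndependent K f)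
    (hinv : ∀ (m : Fin d) (x : L), D x (f m) = 0)
    (c : Fin d → K) (hc : ∀ m, c m ≠ 0)
    (F : ∀ m : Fin d, Fin (r m) → MvPolynomial ι K)
    (hFne : ∀ m t, F m t ≠ 0)
    (s : ∀ m : Fin d, Fin (r m) → ℕ)
    (hgcd : ∀ m, Finset.univ.gcd (s m) = 1)
    (lam : ∀ m : Fin d, Fin (r m) → Module.Dual K L)
    (hFsemi : ∀ m t (x : L), D x (F m t) = lam m t x • F m t)
    (hfact : ∀ m, f m = c m • ∏ t, F m t ^ s m t)
    (hrank : ∀ m, Module.finrank K (Submodule.span K (Set.range (lam m))) = r m - 1)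
    (hindep : iSupIndep fun m => Submodule.span K (Set.range (lam m))) :
    AlgebraicIndependent K (fun p : Σ m : Fin d, Fin (r m) => F p.1 p.2) := by
  have hweight : ∀ m, ∑ t, (s m t : K) • lam m t = 0 := fun m => LinearMap.ext fun x => by
    have hx : D x (∏ t, F m t ^ s m t) = 0 := by
      simpa [hfact, hc] using hinv m x
    simpa using (D x).sum_mul_eq_zero_of_map_prod_pow_eq_zero (hFne m) (fun t => hFsemi m t x)
      (s m) hx
  have hG : LinearIndependent K fun w : Fin d →₀ ℕ => ∏ m, (∏ t, F m t ^ s m t) ^ w m := by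
    have hfG : ∀ m, ∏ t, F m t ^ s m t = (c m)⁻¹ • f m := fun m => by
      rw [hfact, inv_smul_smul₀ (hc m)]
    simpa only [hfG] using hfAI.linearIndependent_prod_smul_pow fun m => inv_ne_zero (hc m)
  let ν : ((Σ m, Fin (r m)) →₀ ℕ) → Module.Dual K L := fun a => ∑ p, (a p : K) • lam p.1 p.2
  rw [algebraicIndependent_iff_linearIndependent_prod_pow]
  refine linearIndependent_of_linearIndepOn_weight_fibers (fun x => (D x).toLinearMap) _
    (fun a => ν a) (fun a x => ?_) fun μ => ?_
  · simpa [ν] using (D x).map_prod_pow_of_map_eq_smul (fun p => hFsemi p.1 p.2 x) a Finset.univ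
  · refine linearIndepOn_prod_pow_of_exists_shift hFne hG fun a ha a' ha' => ?_
    exact exists_shift_of_sum_smul_eq hindep hgcd hweight (by simpa using hrank)
      (DFunLike.coe_injective (ha.trans ha'.symm))

/-- If the invariants `f m` are algebraically independent and each factors as
`f m = c m • ∏ t, (F m t) ^ (s m t)` into semi-invariants with setwise coprime exponents,
the weights for fixed `m` having rank `r m - 1` and the spans of the weights for the
various `m` being in direct sum, then the whole family `(F m t)` is algebraically
independent over the base field. -/
theorem algebraically_independent_semiinvariant_factors
    {K L ι : Type*} [Field K] [IsAlgClosed K] [CharZero K]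
    [LieRing L] [LieAlgebra K L] [FiniteDimensional K L] [Fintype ι]
    (b : Module.Basis ι K L)
    (D : L → Derivation K (MvPolynomial ι K) (MvPolynomial ι K))
    (hD : ∀ (x : L) (i : ι), D x (X i) = ∑ j, (b.repr ⁅x, b i⁆) j • X j)
    (d : ℕ) (hd : 1 ≤ d) (r : Fin d → ℕ)
    (f : Fin d → MvPolynomial ι K)
    (hfAI : AlgebraicIndependent K f)
    (hinv : ∀ (m : Fin d) (x : L), D x (f m) = 0)
    (c : Fin d → K) (hc : ∀ m, c m ≠ 0)
    (F : ∀ m : Fin d, Fin (r m) → MvPolynomial ι K)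
    (hFne : ∀ m t, F m t ≠ 0)
    (s : ∀ m : Fin d, Fin (r m) → ℕ) (hs1 : ∀ m t, 1 ≤ s m t)
    (hgcd : ∀ m, Finset.univ.gcd (s m) = 1)
    (lam : ∀ m : Fin d, Fin (r m) → Module.Dual K L)
    (hFsemi : ∀ m t (x : L), D x (F m t) = lam m t x • F m t)
    (hfact : ∀ m, f m = c m • ∏ t, F m t ^ s m t)
    (hrank : ∀ m, Module.finrank K (Submodule.span K (Set.range (lam m))) = r m - 1)
    (hindep : iSupIndep fun m => Submodule.span K (Set.range (lam m))) :
    AlgebraicIndependent K (fun p : Σ m : Fin d, Fin (r m) => F p.1 p.2) :=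
  algebraically_independent_semiinvariant_factors_general D d r f hfAI hinv c hc F hFne s hgcd lam
    hFsemi hfact hrank hindep
end

section
/- Let k be a finite-dimensional Lie algebra such that Y(k) (the algebra of invariants in Sym(k)) is a UFD. Let λ ∈ Λ(k) be a nonzero weight of a semi-invariant x that is irreducible in Sym(k). Then at least one of the Y(k)-modules Sym(k)_λ and Sym(k)_{−λ} is free of rank ≤ 1 (i.e., is either 0 or generated by a single element over Y(k)). -/
/-!
Let `v` be an irreducible semi-invariant of weight `λ`. Either `v` divides every semi-invariant
of weight `λ`, and then `v` generates `Sym(k)_λ` over `Y(k)`, or some `s ∈ Sym(k)_λ` is not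
divisible by `v`. In the second case take `u ≠ 0` of weight `-λ` (if there is none,
`Sym(k)_{-λ} = 0`). The invariant `v u` factors into primes of the UFD `Y(k)`, and `v`, prime as
`Sym(k)` is a UFD, divides one of them, `q = v w` with `w` of weight `-λ`. For `t` of weight `-λ`,
`q (s t) = (v t) (s w)` in `Y(k)`; as `q` cannot divide `s w`, it divides `v t`, so `t ∈ Y(k) w`.
-/

open MvPolynomial

/-- The algebra of invariants `Y(k) ⊆ Sym(k)`. -/
def invariantAlgebra {K L ι : Type*} [Field K] [LieRing L] [LieAlgebra K L]
    (D : L → Derivation K (MvPolynomial ι K) (MvPolynomial ι K)) :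
    Subalgebra K (MvPolynomial ι K) where
  carrier := {f | ∀ x : L, D x f = 0}
  mul_mem' := by
    intro a b ha hb x
    rw [Derivation.leibniz, ha x, hb x, smul_zero, smul_zero, add_zero]
  add_mem' := by
    intro a b ha hb x
    rw [map_add, ha x, hb x, add_zero]
  algebraMap_mem' := by
    intro c x
    exact Derivation.map_algebraMap (D x) c

theorem Prime.exists_prime_dvd_map {M N F : Type*} [CommMonoidWithZero M]
    [UniqueFactorizationMonoid M] [CommMonoidWithZero N] [FunLike F M N] [MonoidHomClass F M N]
    (f : F) {p : N} (hp : Prime p) {a : M} (ha : a ≠ 0) (hpa : p ∣ f a) :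
    ∃ q : M, Prime q ∧ p ∣ f q := by
  induction a using UniqueFactorizationMonoid.induction_on_prime with
  | h₁ => exact absurd rfl ha
  | h₂ u hu => exact absurd (isUnit_of_dvd_unit hpa (hu.map f)) hp.not_isUnit
  | h₃ a q ha0 hq ih =>
    rw [map_mul] at hpa
    rcases hp.dvd_or_dvd hpa with h | h
    · exact ⟨q, hq, h⟩
    · exact ih ha0 h

section SemiInvariants

variable {K R L : Type*} [CommSemiring K] [CommRing R] [Algebra K R]
  (D : L → Derivation K R R)

def IsSemiInvariant (μ : L → K) (s : R) : Prop :=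
  ∀ x, D x s = μ x • s

def GeneratesWeightSpace (μ : L → K) (g : R) : Prop :=
  ∀ s, IsSemiInvariant D μ s → ∃ y, (∀ x, D x y = 0) ∧ s = y * g

variable {D}

theorem isSemiInvariant_zero_iff {s : R} : IsSemiInvariant D 0 s ↔ ∀ x, D x s = 0 := by
  simp [IsSemiInvariant]

theorem generatesWeightSpace_zero_of_forall_eq_zero {μ : L → K}
    (h : ∀ s, IsSemiInvariant D μ s → s = 0) : GeneratesWeightSpace D μ 0 :=
  fun s hs => ⟨0, fun x => map_zero (D x), by rw [h s hs, mul_zero]⟩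

theorem IsSemiInvariant.mul {μ ν : L → K} {a b : R} (ha : IsSemiInvariant D μ a)
    (hb : IsSemiInvariant D ν b) : IsSemiInvariant D (μ + ν) (a * b) := by
  intro x
  rw [Derivation.leibniz, ha x, hb x, smul_eq_mul, smul_eq_mul, mul_smul_comm, mul_smul_comm,
    mul_comm b a, Pi.add_apply, add_smul, add_comm]

theorem IsSemiInvariant.mul_mem {μ ν : L → K} (hμν : μ + ν = 0) {Y : Subalgebra K R}
    (hY : ∀ f, f ∈ Y ↔ ∀ x, D x f = 0) {a b : R} (ha : IsSemiInvariant D μ a)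
    (hb : IsSemiInvariant D ν b) : a * b ∈ Y :=
  (hY _).2 <| isSemiInvariant_zero_iff.1 (hμν ▸ ha.mul hb)

variable [IsDomain R]

theorem IsSemiInvariant.of_mul {μ ν : L → K} {v w : R} (hv0 : v ≠ 0)
    (hv : IsSemiInvariant D μ v) (hvw : IsSemiInvariant D (μ + ν) (v * w)) :
    IsSemiInvariant D ν w := by
  intro x
  have h := hvw x
  rw [Derivation.leibniz, hv x, smul_eq_mul, smul_eq_mul, mul_smul_comm, mul_comm w v,
    Pi.add_apply, add_smul, add_comm, add_right_inj, ← mul_smul_comm] at h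
  exact mul_left_cancel₀ hv0 h

theorem generatesWeightSpace_of_forall_dvd {μ : L → K} {v : R} (hv0 : v ≠ 0)
    (hv : IsSemiInvariant D μ v) (h : ∀ s, IsSemiInvariant D μ s → v ∣ s) :
    GeneratesWeightSpace D μ v := by
  intro s hs
  obtain ⟨c, rfl⟩ := h s hs
  refine ⟨c, isSemiInvariant_zero_iff.1 (hv.of_mul (ν := 0) hv0 ?_), mul_comm v c⟩
  rwa [add_zero]

theorem exists_prime_eq_mul_of_isSemiInvariant {μ ν : L → K} (hμν : μ + ν = 0)
    {Y : Subalgebra K R} [UniqueFactorizationMonoid Y] (hY : ∀ f, f ∈ Y ↔ ∀ x, D x f = 0)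
    {v u : R} (hvp : Prime v) (hv : IsSemiInvariant D μ v) (hu : IsSemiInvariant D ν u)
    (hu0 : u ≠ 0) :
    ∃ q : Y, Prime q ∧ ∃ w, IsSemiInvariant D ν w ∧ (q : R) = v * w := by
  let vu : Y := ⟨v * u, hv.mul_mem hμν hY hu⟩
  have hvu0 : vu ≠ 0 := fun h => mul_ne_zero hvp.ne_zero hu0 (congrArg Subtype.val h)
  obtain ⟨q, hq, w, hqw⟩ := hvp.exists_prime_dvd_map Y.val hvu0 (dvd_mul_right v u)
  have hqw' : IsSemiInvariant D (μ + ν) (v * w) := by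
    rw [hμν, isSemiInvariant_zero_iff, ← hqw]
    exact (hY q).1 q.2
  exact ⟨q, hq, w, hv.of_mul hvp.ne_zero hqw', hqw⟩

theorem generatesWeightSpace_of_prime_eq_mul {μ ν : L → K} (hμν : μ + ν = 0)
    {Y : Subalgebra K R} (hY : ∀ f, f ∈ Y ↔ ∀ x, D x f = 0) {v w s : R} {q : Y}
    (hq : Prime q) (hqvw : (q : R) = v * w) (hv : IsSemiInvariant D μ v)
    (hw : IsSemiInvariant D ν w) (hs : IsSemiInvariant D μ s) (hvs : ¬v ∣ s) :
    GeneratesWeightSpace D ν w := by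
  have hv0 : v ≠ 0 := left_ne_zero_of_mul (hqvw ▸ Subtype.coe_ne_coe.2 hq.ne_zero)
  have hw0 : w ≠ 0 := right_ne_zero_of_mul (hqvw ▸ Subtype.coe_ne_coe.2 hq.ne_zero)
  intro t ht
  let vt : Y := ⟨v * t, hv.mul_mem hμν hY ht⟩
  let sw : Y := ⟨s * w, hs.mul_mem hμν hY hw⟩
  have hdvd : q ∣ vt * sw := by
    refine ⟨⟨s * t, hs.mul_mem hμν hY ht⟩, Subtype.ext ?_⟩
    simp only [vt, sw, MulMemClass.coe_mul, hqvw]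
    ring
  rcases hq.dvd_or_dvd hdvd with ⟨h, hh⟩ | ⟨h, hh⟩
  · refine ⟨h, (hY h).1 h.2, mul_left_cancel₀ hv0 ?_⟩
    have := congrArg Subtype.val hh
    simp only [vt, MulMemClass.coe_mul, hqvw] at this
    rw [this]; ring
  · refine absurd ⟨h, mul_right_cancel₀ hw0 ?_⟩ hvs
    have := congrArg Subtype.val hh
    simp only [sw, MulMemClass.coe_mul, hqvw] at this
    rw [this]; ring

theorem exists_generatesWeightSpace_of_not_dvd {μ ν : L → K} (hμν : μ + ν = 0)
    {Y : Subalgebra K R} [UniqueFactorizationMonoid Y] (hY : ∀ f, f ∈ Y ↔ ∀ x, D x f = 0)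
    {v s : R} (hvp : Prime v) (hv : IsSemiInvariant D μ v) (hs : IsSemiInvariant D μ s)
    (hvs : ¬v ∣ s) : ∃ g, GeneratesWeightSpace D ν g := by
  by_cases hν : ∃ u, IsSemiInvariant D ν u ∧ u ≠ 0
  · obtain ⟨u, hu, hu0⟩ := hν
    obtain ⟨q, hq, w, hw, hqvw⟩ := exists_prime_eq_mul_of_isSemiInvariant hμν hY hvp hv hu hu0
    exact ⟨w, generatesWeightSpace_of_prime_eq_mul hμν hY hq hqvw hv hw hs hvs⟩
  · push Not at hν
    exact ⟨0, generatesWeightSpace_zero_of_forall_eq_zero hν⟩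

end SemiInvariants

theorem weight_space_free_of_rank_le_one_general
    {K L ι : Type*} [Field K]
    [LieRing L] [LieAlgebra K L]
    (D : L → Derivation K (MvPolynomial ι K) (MvPolynomial ι K))
    (hUFD : UniqueFactorizationMonoid ↥(invariantAlgebra D))
    (lam : Module.Dual K L)
    (v : MvPolynomial ι K) (hirr : Irreducible v)
    (hv : ∀ x : L, D x v = lam x • v) :
    (∃ g : MvPolynomial ι K, ∀ s : MvPolynomial ι K,
        (∀ x : L, D x s = lam x • s) →
        ∃ y : MvPolynomial ι K, (∀ x : L, D x y = 0) ∧ s = y * g) ∨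
    (∃ g : MvPolynomial ι K, ∀ s : MvPolynomial ι K,
        (∀ x : L, D x s = (-lam) x • s) →
        ∃ y : MvPolynomial ι K, (∀ x : L, D x y = 0) ∧ s = y * g) := by
  have hvp : Prime v := hirr.prime
  by_cases hdvd : ∀ s, IsSemiInvariant D lam s → v ∣ s
  · exact .inl ⟨v, generatesWeightSpace_of_forall_dvd hvp.ne_zero hv hdvd⟩
  · push Not at hdvd
    obtain ⟨s, hs, hvs⟩ := hdvd
    have hlam : ⇑lam + ⇑(-lam) = 0 := by ext; simp
    have := hUFD
    exact .inr <| exists_generatesWeightSpace_of_not_dvd hlam (Y := invariantAlgebra D)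
      (fun _ => Iff.rfl) hvp hv hs hvs

/-- If `Y(k)` is a UFD and `λ ≠ 0` is the weight of a semi-invariant which is
irreducible in `Sym(k)`, then one of the `Y(k)`-modules `Sym(k)_λ`, `Sym(k)_{-λ}` is free
of rank at most one, i.e. zero or generated by a single element over `Y(k)`. -/
theorem weight_space_free_of_rank_le_one
    {K L ι : Type*} [Field K] [IsAlgClosed K] [CharZero K]
    [LieRing L] [LieAlgebra K L] [FiniteDimensional K L] [Fintype ι]
    (b : Module.Basis ι K L)
    (D : L → Derivation K (MvPolynomial ι K) (MvPolynomial ι K))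
    (hD : ∀ (x : L) (i : ι), D x (X i) = ∑ j, (b.repr ⁅x, b i⁆) j • X j)
    (hUFD : UniqueFactorizationMonoid ↥(invariantAlgebra D))
    (lam : Module.Dual K L) (hlam : lam ≠ 0)
    (v : MvPolynomial ι K) (hirr : Irreducible v)
    (hv : ∀ x : L, D x v = lam x • v) :
    (∃ g : MvPolynomial ι K, ∀ s : MvPolynomial ι K,
        (∀ x : L, D x s = lam x • s) →
        ∃ y : MvPolynomial ι K, (∀ x : L, D x y = 0) ∧ s = y * g) ∨
    (∃ g : MvPolynomial ι K, ∀ s : MvPolynomial ι K,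
        (∀ x : L, D x s = (-lam) x • s) →
        ∃ y : MvPolynomial ι K, (∀ x : L, D x y = 0) ∧ s = y * g) :=
  weight_space_free_of_rank_le_one_general D hUFD lam v hirr hv
end

section
/- Let n ≥ 2, and fix a partition I = I_1 ⊔ … ⊔ I_s of I = {1,…,n} into consecutive intervals, defining a standard parabolic subalgebra p of gl_n with Levi factor gl_{I_1} × … × gl_{I_s}, opposite nilradical n⁻ spanned by the e_{p,q} with block(p) > block(q). For J ⊆ I, let Δ_J = ∑_{σ∈S(J)} ε(σ) ∏_{j∈J} e_{j,σ(j)} ∈ Sym(gl_n) be the principal minor of J, and define the degree in n⁻ of a monomial ∏ e_{i_k,j_k} as the number of factors lying in n⁻. Then deg_{n⁻} Δ_J = |J| − max_k |J ∩ I_k|. -/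
open MvPolynomial

/-- The principal minor `Δ_J = ∑_{σ ∈ S(J)} ε(σ) ∏_{j ∈ J} e_{j, σ j}` as an element of
`Sym(gl_n)`, realized as the multivariate polynomial algebra on the matrix entries. -/
noncomputable def deltaMinor {K : Type*} [Field K] {n : ℕ} (J : Finset (Fin n)) :
    MvPolynomial (Fin n × Fin n) K :=
  ∑ σ : Equiv.Perm {x // x ∈ J},
    (Equiv.Perm.sign σ : ℤ) • ∏ j : {x // x ∈ J}, X ((j : Fin n), ((σ j : Fin n)))

/-- The degree in `n⁻` of an element of `Sym(gl_n)`: the maximum, over the monomials in the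
support, of the number of factors `e_{p,q}` with `p` in a strictly later block than `q`. -/
noncomputable def degNilradical {K : Type*} [Field K] {n s : ℕ} (blk : Fin n → Fin s)
    (f : MvPolynomial (Fin n × Fin n) K) : ℕ :=
  f.support.sup fun m => ∑ pq ∈ m.support, if blk pq.2 < blk pq.1 then m pq else 0

namespace DegAux

variable {K : Type*} [Field K] {n : ℕ} (J : Finset (Fin n))

/-- exponent monomial attached to a permutation of `J` -/
noncomputable def mSig (σ : Equiv.Perm {x // x ∈ J}) : (Fin n × Fin n) →₀ ℕ :=
  ∑ j : {x // x ∈ J}, Finsupp.single ((j : Fin n), (σ j : Fin n)) 1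

lemma mSig_apply (σ : Equiv.Perm {x // x ∈ J}) (pq : Fin n × Fin n) :
    mSig J σ pq = ∑ j : {x // x ∈ J}, if ((j : Fin n), (σ j : Fin n)) = pq then 1 else 0 := by
  simp [mSig, Finsupp.finset_sum_apply, Finsupp.single_apply]

lemma mSig_apply_self (σ : Equiv.Perm {x // x ∈ J}) (j : {x // x ∈ J}) :
    mSig J σ ((j : Fin n), (σ j : Fin n)) = 1 := by
  rw [mSig_apply]
  rw [Finset.sum_eq_single j]
  · simp
  · intro j' _ hne
    rw [if_neg]
    intro h
    exact hne (Subtype.ext (congrArg Prod.fst h))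
  · simp

lemma mSig_injective : Function.Injective (mSig J) := by
  intro σ τ h
  apply Equiv.ext
  intro j
  have h1 : mSig J τ ((j : Fin n), (σ j : Fin n)) = 1 := by
    rw [← h]; exact mSig_apply_self J σ j
  rw [mSig_apply] at h1
  by_contra hne
  have : ∀ j' : {x // x ∈ J}, j' ∈ (Finset.univ : Finset _) →
      (if ((j' : Fin n), (τ j' : Fin n)) = ((j : Fin n), (σ j : Fin n)) then (1:ℕ) else 0) = 0 := by
    intro j' _
    rw [if_neg]
    intro hh
    have hj : j' = j := Subtype.ext (congrArg Prod.fst hh)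
    subst hj
    exact hne (Subtype.ext (congrArg Prod.snd hh).symm)
  rw [Finset.sum_eq_zero this] at h1
  exact one_ne_zero h1.symm

lemma prod_monomial {ι : Type*} (t : Finset ι) (a : ι → ((Fin n × Fin n) →₀ ℕ)) :
    (∏ i ∈ t, (monomial (a i) (1 : K))) = monomial (∑ i ∈ t, a i) 1 := by
  induction t using Finset.cons_induction with
  | empty => simp
  | cons i t hi ih => rw [Finset.prod_cons, Finset.sum_cons, ih, monomial_mul, one_mul]

lemma deltaMinor_eq :
    deltaMinor (K := K) J = ∑ σ : Equiv.Perm {x // x ∈ J},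
      monomial (mSig J σ) (((Equiv.Perm.sign σ : ℤ) : K)) := by
  unfold deltaMinor
  refine Finset.sum_congr rfl fun σ _ => ?_
  have : (∏ j : {x // x ∈ J}, (X ((j : Fin n), (σ j : Fin n)) : MvPolynomial (Fin n × Fin n) K))
      = monomial (mSig J σ) 1 := by
    rw [mSig, ← prod_monomial]
    refine Finset.prod_congr rfl fun j _ => ?_
    rfl
  rw [this, smul_monomial]
  congr 1
  simp

lemma coeff_deltaMinor (τ : Equiv.Perm {x // x ∈ J}) :
    coeff (mSig J τ) (deltaMinor (K := K) J) = ((Equiv.Perm.sign τ : ℤ) : K) := by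
  rw [deltaMinor_eq, coeff_sum]
  rw [Finset.sum_eq_single τ]
  · simp [coeff_monomial]
  · intro σ _ hne
    rw [coeff_monomial, if_neg]
    exact fun h => hne (mSig_injective J h)
  · simp

lemma sign_cast_ne_zero (τ : Equiv.Perm {x // x ∈ J}) :
    ((Equiv.Perm.sign τ : ℤ) : K) ≠ 0 := by
  rcases Int.units_eq_one_or (Equiv.Perm.sign τ) with h | h <;> rw [h] <;> simp

lemma support_deltaMinor :
    (deltaMinor (K := K) J).support = Finset.univ.image (mSig J) := by
  ext m
  simp only [mem_support_iff, Finset.mem_image, Finset.mem_univ, true_and]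
  constructor
  · intro hm
    by_contra hno
    push_neg at hno
    apply hm
    rw [deltaMinor_eq, coeff_sum]
    refine Finset.sum_eq_zero fun σ _ => ?_
    rw [coeff_monomial, if_neg (hno σ)]
  · rintro ⟨τ, rfl⟩
    rw [coeff_deltaMinor]
    exact sign_cast_ne_zero J τ

section Comb
variable {n s : ℕ} (blk : Fin n → Fin s) (J : Finset (Fin n))

noncomputable def descNum (σ : Equiv.Perm {x // x ∈ J}) : ℕ :=
  (Finset.univ.filter fun j : {x // x ∈ J} => blk (σ j : Fin n) < blk (j : Fin n)).card

lemma g_mSig (σ : Equiv.Perm {x // x ∈ J}) :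
    (∑ pq ∈ (∑ j : {x // x ∈ J}, Finsupp.single ((j : Fin n), (σ j : Fin n)) 1).support,
      if blk pq.2 < blk pq.1 then
        (∑ j : {x // x ∈ J}, Finsupp.single ((j : Fin n), (σ j : Fin n)) (1:ℕ)) pq else 0)
      = descNum blk J σ := by
  have key : ∀ (t : Finset {x // x ∈ J}),
      (∑ pq ∈ (∑ j ∈ t, Finsupp.single ((j : Fin n), (σ j : Fin n)) 1).support,
        if blk pq.2 < blk pq.1 then
          (∑ j ∈ t, Finsupp.single ((j : Fin n), (σ j : Fin n)) (1:ℕ)) pq else 0)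
        = (t.filter fun j => blk (σ j : Fin n) < blk (j : Fin n)).card := by
    intro t
    have : (∑ pq ∈ (∑ j ∈ t, Finsupp.single ((j : Fin n), (σ j : Fin n)) 1).support,
        if blk pq.2 < blk pq.1 then
          (∑ j ∈ t, Finsupp.single ((j : Fin n), (σ j : Fin n)) (1:ℕ)) pq else 0)
        = (∑ j ∈ t, Finsupp.single ((j : Fin n), (σ j : Fin n)) (1:ℕ)).sum
            (fun pq v => if blk pq.2 < blk pq.1 then v else 0) := rfl
    rw [this, ← Finsupp.sum_finsetSum_index]
    · rw [Finset.card_filter]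
      refine Finset.sum_congr rfl fun j _ => ?_
      rw [Finsupp.sum_single_index] <;> simp
    · intro pq; simp
    · intro pq v w; split <;> simp
  exact key Finset.univ

lemma card_subtype_filter (p : Fin n → Prop) [DecidablePred p] :
    (Finset.univ.filter fun j : {x // x ∈ J} => p (j : Fin n)).card = (J.filter p).card := by
  refine Finset.card_bij (fun j _ => (j : Fin n)) ?_ ?_ ?_
  · intro j hj
    simp only [Finset.mem_filter, Finset.mem_univ, true_and] at hj
    exact Finset.mem_filter.mpr ⟨j.2, hj⟩
  · intro a ha b hb hab
    exact Subtype.ext hab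
  · intro b hb
    rw [Finset.mem_filter] at hb
    exact ⟨⟨b, hb.1⟩, by simpa using hb.2, rfl⟩

/-- upper bound: for every block `k`, the number of descents is at most `|J| - n_k`. -/
lemma descNum_le (σ : Equiv.Perm {x // x ∈ J}) (k : Fin s) :
    descNum blk J σ ≤ J.card - (J.filter fun x => blk x = k).card := by
  classical
  set N : Finset {x // x ∈ J} := Finset.univ.filter fun j : {x // x ∈ J} => ¬ blk (σ j : Fin n) < blk (j : Fin n)
    with hN
  have hsplit : descNum blk J σ + N.card = J.card := by
    rw [descNum, hN, Finset.card_filter_add_card_filter_not, Finset.card_univ,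
      Fintype.card_coe]
  set A : Finset {x // x ∈ J} := Finset.univ.filter fun j : {x // x ∈ J} => blk (j : Fin n) ≤ k with hA
  set B : Finset {x // x ∈ J} := Finset.univ.filter fun j : {x // x ∈ J} => k ≤ blk (σ j : Fin n) with hB
  set B' : Finset {x // x ∈ J} := Finset.univ.filter fun j : {x // x ∈ J} => k ≤ blk (j : Fin n) with hB'
  have hcardB : B.card = B'.card := by
    refine Finset.card_bij (fun j _ => σ j) ?_ ?_ ?_
    · intro j hj
      simp only [hB, Finset.mem_filter, Finset.mem_univ, true_and] at hj
      simp only [hB', Finset.mem_filter, Finset.mem_univ, true_and]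
      exact hj
    · intro a _ b _ hab; exact σ.injective hab
    · intro b hb
      refine ⟨σ.symm b, ?_, by simp⟩
      simp only [hB, Finset.mem_filter, Finset.mem_univ, true_and, Equiv.apply_symm_apply]
      simpa [hB', Finset.mem_filter] using hb
  have hunion : A ∪ B' = Finset.univ := by
    ext j
    simp only [Finset.mem_union, hA, hB', Finset.mem_filter, Finset.mem_univ, true_and,
      iff_true]
    exact le_total (blk (j : Fin n)) k
  have hinter : (A ∩ B').card = (J.filter fun x => blk x = k).card := by
    rw [← card_subtype_filter J (fun x => blk x = k)]
    congr 1
    ext j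
    simp only [Finset.mem_inter, hA, hB', Finset.mem_filter, Finset.mem_univ, true_and]
    constructor
    · rintro ⟨h1, h2⟩; exact le_antisymm h1 h2
    · rintro h; exact ⟨le_of_eq h, ge_of_eq h⟩
  have hsum : A.card + B'.card = J.card + (J.filter fun x => blk x = k).card := by
    rw [← hinter, ← Finset.card_union_add_card_inter, hunion, Finset.card_univ,
      Fintype.card_coe]
  have hAB : A ∩ B ⊆ N := by
    intro j hj
    simp only [Finset.mem_inter, hA, hB, Finset.mem_filter, Finset.mem_univ, true_and] at hj
    simp only [hN, Finset.mem_filter, Finset.mem_univ, true_and, not_lt]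
    exact hj.1.trans hj.2
  have h1 : A.card + B.card ≤ J.card + (A ∩ B).card := by
    rw [← Finset.card_union_add_card_inter]
    have : (A ∪ B).card ≤ J.card := by
      rw [← Fintype.card_coe J, ← Finset.card_univ]
      exact Finset.card_le_card (Finset.subset_univ _)
    omega
  have h2 : (A ∩ B).card ≤ N.card := Finset.card_le_card hAB
  omega

lemma exists_descNum_ge (hmono : Monotone blk) :
    ∃ σ : Equiv.Perm {x // x ∈ J},
      J.card - (Finset.univ.sup fun k : Fin s => (J.filter fun x => blk x = k).card)
        ≤ descNum blk J σ := by
  classical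
  set M := (Finset.univ.sup fun k : Fin s => (J.filter fun x => blk x = k).card) with hM
  by_cases hMm : J.card ≤ M
  · exact ⟨1, by omega⟩
  push_neg at hMm
  have hm0 : 0 < J.card := lt_of_le_of_lt (Nat.zero_le _) hMm
  haveI : NeZero J.card := ⟨by omega⟩
  set m := J.card with hmdef
  let e : Fin m ≃o {x // x ∈ J} := J.orderIsoOfFin rfl
  let Mf : Fin m := ⟨M, hMm⟩
  let σ0 : Equiv.Perm {x // x ∈ J} :=
    (e.toEquiv.symm.trans (Equiv.subRight Mf)).trans e.toEquiv
  have key : ∀ i : Fin m, M ≤ i.val → blk ((e (i - Mf) : {x // x ∈ J}) : Fin n) <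
      blk ((e i : {x // x ∈ J}) : Fin n) := by
    intro i hi
    have hsub : (i - Mf).val = i.val - M := Fin.sub_val_of_le (by exact hi)
    have hle : i - Mf ≤ i := by
      rw [Fin.le_def, hsub]; omega
    have hble : blk ((e (i - Mf) : {x // x ∈ J}) : Fin n) ≤
        blk ((e i : {x // x ∈ J}) : Fin n) :=
      hmono (Subtype.coe_le_coe.mpr (e.monotone hle))
    rcases lt_or_eq_of_le hble with h | heq
    · exact h
    exfalso
    set k := blk ((e i : {x // x ∈ J}) : Fin n) with hk
    have hsubset : (Finset.Icc (i - Mf) i).image (fun t => ((e t : {x // x ∈ J}) : Fin n))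
        ⊆ J.filter fun x => blk x = k := by
      intro x hx
      rw [Finset.mem_image] at hx
      obtain ⟨t, ht, rfl⟩ := hx
      rw [Finset.mem_Icc] at ht
      refine Finset.mem_filter.mpr ⟨(e t).2, ?_⟩
      have h1 : blk ((e (i - Mf) : {x // x ∈ J}) : Fin n) ≤ blk ((e t : {x // x ∈ J}) : Fin n) :=
        hmono (Subtype.coe_le_coe.mpr (e.monotone ht.1))
      have h2 : blk ((e t : {x // x ∈ J}) : Fin n) ≤ blk ((e i : {x // x ∈ J}) : Fin n) :=
        hmono (Subtype.coe_le_coe.mpr (e.monotone ht.2))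
      rw [heq] at h1
      exact le_antisymm h2 h1
    have hinj : Function.Injective (fun t : Fin m => ((e t : {x // x ∈ J}) : Fin n)) := by
      intro a b h
      exact e.injective (Subtype.ext h)
    have hcard : ((Finset.Icc (i - Mf) i).image
        (fun t => ((e t : {x // x ∈ J}) : Fin n))).card = M + 1 := by
      rw [Finset.card_image_of_injective _ hinj, Fin.card_Icc, hsub]
      omega
    have hle2 : (J.filter fun x => blk x = k).card ≤ M :=
      hM ▸ Finset.le_sup (f := fun k => (J.filter fun x => blk x = k).card) (Finset.mem_univ k)
    have := Finset.card_le_card hsubset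
    omega
  refine ⟨σ0, ?_⟩
  have happ : ∀ j : {x // x ∈ J}, σ0 j = e (e.symm j - Mf) := fun j => rfl
  have hsub2 : (Finset.univ.filter fun i : Fin m => M ≤ i.val).card ≤ descNum blk J σ0 := by
    refine Finset.card_le_card_of_injOn (fun i => e i) ?_ ?_
    · intro i hi
      rw [Finset.mem_coe, Finset.mem_filter] at hi
      rw [Finset.mem_coe, Finset.mem_filter]
      refine ⟨Finset.mem_univ _, ?_⟩
      rw [happ]
      simpa using key i hi.2
    · intro a _ b _ h
      exact e.injective h
  have hcard2 : (Finset.univ.filter fun i : Fin m => M ≤ i.val).card = m - M := by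
    have : (Finset.univ.filter fun i : Fin m => M ≤ i.val) = Finset.Ici Mf := by
      ext i
      simp [Finset.mem_Ici, Fin.le_def, Mf]
    rw [this, Fin.card_Ici]
  omega

end Comb
end DegAux

/-- with `{1,…,n}` partitioned into consecutive blocks (the fibres of the
monotone surjection `blk`), the degree in `n⁻` of the principal minor `Δ_J` equals
`|J| - max_k |J ∩ I_k|`. -/
theorem degNilradical_deltaMinor
    {K : Type*} [Field K] {n s : ℕ} (hn : 2 ≤ n)
    (blk : Fin n → Fin s) (hmono : Monotone blk) (hsurj : Function.Surjective blk)
    (J : Finset (Fin n)) :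
    degNilradical blk (deltaMinor (K := K) J) =
      J.card - Finset.univ.sup fun k : Fin s => (J.filter fun x => blk x = k).card := by
  classical
  have hsup : degNilradical blk (deltaMinor (K := K) J)
      = Finset.univ.sup (DegAux.descNum blk J) := by
    rw [degNilradical, DegAux.support_deltaMinor, Finset.sup_image]
    exact Finset.sup_congr rfl fun σ _ => DegAux.g_mSig blk J σ
  rw [hsup]
  refine le_antisymm ?_ ?_
  · haveI : Nonempty (Fin s) := ⟨blk ⟨0, by omega⟩⟩
    obtain ⟨k0, -, hk0⟩ := Finset.exists_mem_eq_sup (Finset.univ : Finset (Fin s))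
      Finset.univ_nonempty (fun k => (J.filter fun x => blk x = k).card)
    rw [hk0]
    exact Finset.sup_le fun σ _ => DegAux.descNum_le blk J σ k0
  · obtain ⟨σ0, h⟩ := DegAux.exists_descNum_ge blk J hmono
    exact h.trans (Finset.le_sup (Finset.mem_univ σ0))
end

section
/- With notation as in the parabolic setting for gl_n (partition into blocks of sizes i_1,…,i_s, and m_i := ∑_{k=1}^s min(i, i_k)), let F_j = ∑_{|J|=j} Δ_J be the sum of all principal minors of size j. Then for every j ∈ {1,…,n}, the quantity j − deg_{n⁻} F_j equals the unique i ∈ {1,…,i_max} such that m_{i−1} < j ≤ m_i, where i_max = max_k i_k. -/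
open MvPolynomial

/-- `F_j`, the sum of all principal minors of size `j`. -/
noncomputable def sumMinors (K : Type*) [Field K] (n j : ℕ) :
    MvPolynomial (Fin n × Fin n) K :=
  ∑ J ∈ Finset.powersetCard j (Finset.univ : Finset (Fin n)), deltaMinor J

/-! A monomial of `F_j` is `∏_{p ∈ J} e_{p,σ p}` for a `j`-subset `J` and a permutation `σ`
of `J`; distinct pairs `(J, σ)` give distinct monomials, so nothing cancels, and the
`n⁻`-degree of that monomial is the number of `p` with `σ p` in an earlier block than `p`.
Since `σ` moves as many points of `J` out of the blocks `≥ k` as into them, at least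
`|J ∩ I_k|` positions do not go down, so the degree is at most `j - max_k |J ∩ I_k|`;
conversely the cyclic shift of the sorted `J` by `max_k |J ∩ I_k|` goes down everywhere else.
So `j - deg_{n⁻} F_j` is the least value of `max_k |J ∩ I_k|` over `j`-subsets `J`, and a
`j`-subset meeting every block in at most `i` points exists exactly when `j ≤ m_i`. -/

open Finset

section PermutationCounting

variable {α β : Type*} [Fintype α] [LinearOrder β]

lemma card_fiber_le_card_filter_le_comp (b : α → β) (σ : Equiv.Perm α) (k : β) :
    #{p | b p = k} ≤ #{p | b p ≤ b (σ p)} := by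
  classical
  set F : Finset α := {p | b p = k}
  set U : Finset α := {p | k ≤ b p}
  set V : Finset α := {p | k ≤ b (σ p)}
  have hcross : #(U \ V) = #(V \ U) := card_sdiff_comm (card_equiv σ (by simp [U, V])).symm
  have hleave : F \ V ⊆ U \ V := sdiff_subset_sdiff (fun p hp => by simp_all [F, U]) subset_rfl
  have hup : F ∩ V ∪ V \ U ⊆ ({p | b p ≤ b (σ p)} : Finset α) := by
    intro p hp
    simp only [F, U, V, mem_union, mem_inter, mem_sdiff, mem_filter, mem_univ, true_and,
      not_le] at hp ⊢
    rcases hp with ⟨rfl, h⟩ | ⟨h, h'⟩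
    · exact h
    · exact h'.le.trans h
  have hdisj : Disjoint (F ∩ V) (V \ U) :=
    disjoint_left.mpr fun p hp hp' => by simp_all [F, U, V]
  calc #F = #(F ∩ V) + #(F \ V) := (card_inter_add_card_sdiff F V).symm
    _ ≤ #(F ∩ V) + #(V \ U) := hcross ▸ Nat.add_le_add_left (card_le_card hleave) _
    _ = #(F ∩ V ∪ V \ U) := (card_union_of_disjoint hdisj).symm
    _ ≤ _ := card_le_card hup

lemma card_filter_lt_comp_add_card_fiber_le (b : α → β) (σ : Equiv.Perm α) (k : β) :
    #{p | b (σ p) < b p} + #{p | b p = k} ≤ Fintype.card α := by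
  have h := card_filter_add_card_filter_not (s := univ) (fun p => b (σ p) < b p)
  simp only [not_lt, card_univ] at h
  have := card_fiber_le_card_filter_le_comp b σ k
  omega

lemma Monotone.lt_of_card_fiber_le {j i : ℕ} {b : Fin j → β} (hb : Monotone b)
    (hfib : ∀ k, #{t | b t = k} ≤ i) {r t : Fin j} (hrt : (r : ℕ) + i ≤ t) : b r < b t := by
  refine (hb (Fin.le_def.mpr (by omega))).lt_of_ne fun heq => ?_
  have hsub : Icc r t ⊆ ({u | b u = b t} : Finset (Fin j)) := fun u hu => by
    obtain ⟨hru, hut⟩ := mem_Icc.mp hu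
    simpa using le_antisymm (hb hut) (heq ▸ hb hru)
  have := (card_le_card hsub).trans (hfib (b t))
  rw [Fin.card_Icc] at this
  omega

lemma Monotone.exists_perm_card_filter_lt_comp [LinearOrder α] {b : α → β} (hb : Monotone b)
    {i : ℕ} (hfib : ∀ k, #{p | b p = k} ≤ i) :
    ∃ σ : Equiv.Perm α, Fintype.card α - i ≤ #{p | b (σ p) < b p} := by
  set j := Fintype.card α
  rcases le_or_gt j i with hji | hij
  · exact ⟨1, by omega⟩
  have : NeZero j := ⟨by omega⟩
  set e : Fin j ≃o α := Fintype.orderIsoFinOfCardEq α rfl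
  set shift : Fin j := ⟨i, hij⟩
  set σ : Equiv.Perm α := e.toEquiv.permCongr (Equiv.subRight shift)
  refine ⟨σ, ?_⟩
  have hfib' : ∀ k, #{t | b (e t) = k} ≤ i := fun k =>
    (card_equiv e.toEquiv (by simp)).le.trans (hfib k)
  have hdown : ∀ t ∈ Ici shift, e t ∈ ({p | b (σ p) < b p} : Finset α) := by
    intro t ht
    have hval : ((t - shift : Fin j) : ℕ) = t - i := Fin.coe_sub_iff_le.mpr (mem_Ici.mp ht)
    have hit : i ≤ (t : ℕ) := Fin.le_def.mp (mem_Ici.mp ht)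
    have hlt : b (e (t - shift)) < b (e t) :=
      (hb.comp e.monotone).lt_of_card_fiber_le hfib' (by omega)
    simpa [σ] using hlt
  calc j - i = #(Ici shift) := by simp [Fin.card_Ici, shift]
    _ ≤ _ := card_le_card_of_injOn e hdown e.injective.injOn

end PermutationCounting

section Minors

variable {n : ℕ}

noncomputable def minorExponent (J : Finset (Fin n)) (σ : Equiv.Perm J) :
    Fin n × Fin n →₀ ℕ :=
  ∑ p : J, Finsupp.single ((p : Fin n), (σ p : Fin n)) 1

lemma support_minorExponent (J : Finset (Fin n)) (σ : Equiv.Perm J) :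
    (minorExponent J σ).support = univ.image fun p : J => ((p : Fin n), (σ p : Fin n)) := by
  rw [minorExponent, Finsupp.support_sum_eq_biUnion]
  · ext; simp [Finsupp.support_single, eq_comm]
  · intro p p' hpp'
    rw [Finsupp.support_single _ one_ne_zero, Finsupp.support_single _ one_ne_zero,
      disjoint_singleton, Ne, Prod.mk.injEq, not_and]
    exact fun h => absurd (Subtype.ext h) hpp'

lemma image_fst_support_minorExponent (J : Finset (Fin n)) (σ : Equiv.Perm J) :
    (minorExponent J σ).support.image Prod.fst = J := by
  ext x
  simp [support_minorExponent]

lemma minorExponent_injective (J : Finset (Fin n)) : Function.Injective (minorExponent J) := by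
  intro σ τ h
  ext p : 2
  have hp : ((p : Fin n), (σ p : Fin n)) ∈ (minorExponent J τ).support := by
    rw [← h, support_minorExponent]; exact mem_image_of_mem _ (mem_univ p)
  rw [support_minorExponent, mem_image] at hp
  obtain ⟨q, -, hq⟩ := hp
  obtain rfl : q = p := Subtype.ext (congrArg Prod.fst hq)
  exact (congrArg Prod.snd hq).symm

variable {K : Type*} [Field K]

lemma deltaMinor_eq_sum_monomial (J : Finset (Fin n)) :
    (deltaMinor J : MvPolynomial (Fin n × Fin n) K) =
      ∑ σ : Equiv.Perm J, monomial (minorExponent J σ) ((Equiv.Perm.sign σ : ℤ) : K) := by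
  refine sum_congr rfl fun σ _ => ?_
  simp only [X]
  rw [minorExponent, ← monomial_sum_one, smul_monomial, zsmul_eq_mul, mul_one]

lemma coeff_sumMinors {j : ℕ} (μ : Fin n × Fin n →₀ ℕ) :
    coeff μ (sumMinors K n j) = ∑ J ∈ powersetCard j univ, ∑ σ : Equiv.Perm J,
      if minorExponent J σ = μ then ((Equiv.Perm.sign σ : ℤ) : K) else 0 := by
  simp only [sumMinors, deltaMinor_eq_sum_monomial, coeff_sum, coeff_monomial]

lemma exists_minorExponent_eq_of_mem_support {j : ℕ} {μ : Fin n × Fin n →₀ ℕ}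
    (h : μ ∈ (sumMinors K n j).support) :
    ∃ (J : Finset (Fin n)) (σ : Equiv.Perm J), #J = j ∧ minorExponent J σ = μ := by
  rw [mem_support_iff, coeff_sumMinors] at h
  obtain ⟨J, hJ, hJne⟩ := exists_ne_zero_of_sum_ne_zero h
  obtain ⟨σ, -, hσ⟩ := exists_ne_zero_of_sum_ne_zero hJne
  exact ⟨J, σ, (mem_powersetCard.mp hJ).2, of_not_not fun h => hσ (if_neg h)⟩

lemma coeff_minorExponent_sumMinors {J : Finset (Fin n)} (σ : Equiv.Perm J) :
    coeff (minorExponent J σ) (sumMinors K n #J) = ((Equiv.Perm.sign σ : ℤ) : K) := by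
  rw [coeff_sumMinors, sum_eq_single_of_mem J (mem_powersetCard.mpr ⟨subset_univ _, rfl⟩),
    sum_eq_single σ]
  · exact if_pos rfl
  · exact fun τ _ hτ => if_neg fun h => hτ (minorExponent_injective J h)
  · exact fun h => absurd (mem_univ σ) h
  · intro J' _ hJ'
    refine sum_eq_zero fun τ _ => if_neg fun h => hJ' ?_
    rw [← image_fst_support_minorExponent J' τ, h, image_fst_support_minorExponent]

lemma minorExponent_mem_support_sumMinors {J : Finset (Fin n)} (σ : Equiv.Perm J) :
    minorExponent J σ ∈ (sumMinors K n #J).support := by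
  rw [mem_support_iff, coeff_minorExponent_sumMinors]
  rcases Int.units_eq_one_or (Equiv.Perm.sign σ) with h | h <;> simp [h]

end Minors

section Nilradical

variable {n s : ℕ} (blk : Fin n → Fin s)

def nilradicalWeight (pq : Fin n × Fin n) : ℕ := if blk pq.2 < blk pq.1 then 1 else 0

lemma degNilradical_eq_weightedTotalDegree {K : Type*} [Field K]
    (f : MvPolynomial (Fin n × Fin n) K) :
    degNilradical blk f = weightedTotalDegree (nilradicalWeight blk) f := by
  refine congrArg (f.support.sup ·) (funext fun μ => ?_)
  simp only [Finsupp.weight_apply, Finsupp.sum, nilradicalWeight, smul_eq_mul, mul_ite, mul_one,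
    mul_zero]

lemma weight_nilradicalWeight_minorExponent (J : Finset (Fin n)) (σ : Equiv.Perm J) :
    Finsupp.weight (nilradicalWeight blk) (minorExponent J σ) =
      #{p | blk (σ p : Fin n) < blk p} := by
  simp [minorExponent, Finsupp.weight_single, nilradicalWeight]

end Nilradical

lemma card_filter_univ_coe {α : Type*} (s : Finset α) (P : α → Prop) [DecidablePred P] :
    #{x : s | P x} = #{x ∈ s | P x} := by
  rw [univ_eq_attach, filter_attach, card_map, card_attach]

section Fibres

variable {α β : Type*} [Fintype α] [Fintype β] [DecidableEq β] (b : α → β)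

lemma exists_lt_card_fiber_of_sum_min_lt {J : Finset α} {i : ℕ}
    (h : ∑ k, min i #{x | b x = k} < #J) : ∃ k, i < #{x ∈ J | b x = k} := by
  by_contra! hle
  have hJ : #J = ∑ k, #{x ∈ J | b x = k} :=
    card_eq_sum_card_fiberwise fun x _ => mem_univ (b x)
  have : ∑ k, #{x ∈ J | b x = k} ≤ ∑ k, min i #{x | b x = k} :=
    sum_le_sum fun k _ => le_min (hle k) (card_le_card (filter_subset_filter _ (subset_univ J)))
  omega

lemma exists_card_eq_forall_card_fiber_le {i j : ℕ} (h : j ≤ ∑ k, min i #{x | b x = k}) :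
    ∃ J : Finset α, #J = j ∧ ∀ k, #{x ∈ J | b x = k} ≤ i := by
  classical
  choose S hS hcard using fun k => exists_subset_card_eq (min_le_right i #{x | b x = k})
  have hdisj : ((univ : Finset β) : Set β).PairwiseDisjoint S := fun k _ k' _ hkk' =>
    (disjoint_filter.mpr fun x _ (hk : b x = k) hk' => hkk' (hk ▸ hk')).mono (hS k) (hS k')
  have hT : #(univ.biUnion S) = ∑ k, min i #{x | b x = k} := by
    rw [card_biUnion hdisj]
    exact sum_congr rfl fun k _ => hcard k
  obtain ⟨J, hJT, rfl⟩ := exists_subset_card_eq (hT ▸ h)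
  refine ⟨J, rfl, fun k => (card_le_card fun x hx => ?_).trans
    ((hcard k).trans_le (min_le_left _ _))⟩
  obtain ⟨hxJ, rfl⟩ := mem_filter.mp hx
  obtain ⟨k', -, hk'⟩ := mem_biUnion.mp (hJT hxJ)
  rwa [(mem_filter.mp (hS k' hk')).2]

end Fibres

lemma sub_degNilradical_sumMinors_eq {K : Type*} [Field K] {n s : ℕ} {blk : Fin n → Fin s}
    (hmono : Monotone blk) {i j : ℕ}
    (hlarge : ∀ J : Finset (Fin n), #J = j → ∃ k, i ≤ #{x ∈ J | blk x = k})
    (hsmall : ∃ J : Finset (Fin n), #J = j ∧ ∀ k, #{x ∈ J | blk x = k} ≤ i) :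
    j - degNilradical blk (sumMinors K n j) = i := by
  obtain ⟨J₀, rfl, hJ₀⟩ := hsmall
  have hi : i ≤ #J₀ := let ⟨k, hk⟩ := hlarge J₀ rfl; hk.trans (card_filter_le _ _)
  suffices degNilradical blk (sumMinors K n #J₀) = #J₀ - i by omega
  rw [degNilradical_eq_weightedTotalDegree]
  refine le_antisymm (Finset.sup_le fun μ hμ => ?_) ?_
  · obtain ⟨J, σ, hJ, rfl⟩ := exists_minorExponent_eq_of_mem_support hμ
    obtain ⟨k, hk⟩ := hlarge J hJ
    have := card_filter_lt_comp_add_card_fiber_le (fun p : J => blk p) σ k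
    rw [card_filter_univ_coe J (blk · = k), Fintype.card_coe] at this
    rw [weight_nilradicalWeight_minorExponent]
    omega
  · have hfib (k : Fin s) : #{p : J₀ | blk p = k} ≤ i :=
      (card_filter_univ_coe J₀ (blk · = k)).trans_le (hJ₀ k)
    obtain ⟨σ, hσ⟩ :=
      (hmono.comp (Subtype.mono_coe (· ∈ J₀))).exists_perm_card_filter_lt_comp hfib
    calc #J₀ - i ≤ #{p | blk (σ p : Fin n) < blk p} := by simpa using hσ
      _ = Finsupp.weight (nilradicalWeight blk) (minorExponent J₀ σ) :=
        (weight_nilradicalWeight_minorExponent blk J₀ σ).symm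
      _ ≤ _ := le_weightedTotalDegree _ (minorExponent_mem_support_sumMinors σ)

lemma Monotone.existsUnique_lt_le {α : Type*} [LinearOrder α] {m : ℕ → α} (hm : Monotone m)
    {a : α} {N : ℕ} (h0 : m 0 < a) (hN : a ≤ m N) :
    ∃! i, 1 ≤ i ∧ i ≤ N ∧ m (i - 1) < a ∧ a ≤ m i := by
  have hex : ∃ i, a ≤ m i := ⟨N, hN⟩
  have hpos : Nat.find hex ≠ 0 := fun h => (h ▸ Nat.find_spec hex).not_gt h0
  refine ⟨Nat.find hex, ⟨by omega, Nat.find_min' hex hN,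
    not_le.mp (Nat.find_min hex (by omega)), Nat.find_spec hex⟩, ?_⟩
  rintro i ⟨-, -, hlt, hle⟩
  refine le_antisymm ?_ (Nat.find_min' hex hle)
  by_contra! h
  exact (hlt.trans_le (Nat.find_spec hex)).not_ge (hm (by omega))

theorem sub_degNilradical_sumMinors_general
    {K : Type*} [Field K] {n s : ℕ}
    (blk : Fin n → Fin s) (hmono : Monotone blk)
    (m : ℕ → ℕ)
    (hm : ∀ i, m i = ∑ k : Fin s, min i ((Finset.univ.filter fun x => blk x = k).card))
    (imax : ℕ)
    (himax : imax = Finset.univ.sup fun k : Fin s =>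
      (Finset.univ.filter fun x => blk x = k).card)
    (j : ℕ) (hj1 : 1 ≤ j) (hj2 : j ≤ n) :
    (∃! i : ℕ, 1 ≤ i ∧ i ≤ imax ∧ m (i - 1) < j ∧ j ≤ m i) ∧
    1 ≤ j - degNilradical blk (sumMinors K n j) ∧
    j - degNilradical blk (sumMinors K n j) ≤ imax ∧
    m (j - degNilradical blk (sumMinors K n j) - 1) < j ∧
    j ≤ m (j - degNilradical blk (sumMinors K n j)) := by
  have hm_mono : Monotone m := fun a b hab => by
    simp only [hm]
    exact sum_le_sum fun k _ => min_le_min_right _ hab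
  have hm0 : m 0 < j := by simp only [hm, Nat.zero_min, sum_const_zero]; omega
  have hmax : j ≤ m imax := by
    have hn : n = ∑ k : Fin s, #{x | blk x = k} := by
      simpa using card_eq_sum_card_fiberwise fun x (_ : x ∈ univ) => mem_univ (blk x)
    rw [hm, sum_congr rfl fun k _ => min_eq_right
      ((le_sup (f := fun k => #{x | blk x = k}) (mem_univ k)).trans_eq himax.symm)]
    exact hn ▸ hj2
  obtain ⟨i, ⟨hi1, hi_le, hlt, hle⟩, huniq⟩ := hm_mono.existsUnique_lt_le hm0 hmax
  have hi : j - degNilradical blk (sumMinors K n j) = i := by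
    refine sub_degNilradical_sumMinors_eq hmono (fun J hJ => ?_)
      (exists_card_eq_forall_card_fiber_le blk (hm i ▸ hle))
    obtain ⟨k, hk⟩ := exists_lt_card_fiber_of_sum_min_lt blk (hJ ▸ hm (i - 1) ▸ hlt)
    exact ⟨k, by omega⟩
  rw [hi]
  exact ⟨⟨i, ⟨hi1, hi_le, hlt, hle⟩, huniq⟩, hi1, hi_le, hlt, hle⟩

/-- for every `j ∈ {1,…,n}`, the quantity `j - deg_{n⁻} F_j` is the unique
`i ∈ {1,…,i_max}` with `m_{i-1} < j ≤ m_i`, where `m_i = ∑_k min(i, i_k)`. -/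
theorem sub_degNilradical_sumMinors
    {K : Type*} [Field K] {n s : ℕ}
    (blk : Fin n → Fin s) (hmono : Monotone blk) (hsurj : Function.Surjective blk)
    (m : ℕ → ℕ)
    (hm : ∀ i, m i = ∑ k : Fin s, min i ((Finset.univ.filter fun x => blk x = k).card))
    (imax : ℕ)
    (himax : imax = Finset.univ.sup fun k : Fin s =>
      (Finset.univ.filter fun x => blk x = k).card)
    (j : ℕ) (hj1 : 1 ≤ j) (hj2 : j ≤ n) :
    (∃! i : ℕ, 1 ≤ i ∧ i ≤ imax ∧ m (i - 1) < j ∧ j ≤ m i) ∧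
    1 ≤ j - degNilradical blk (sumMinors K n j) ∧
    j - degNilradical blk (sumMinors K n j) ≤ imax ∧
    m (j - degNilradical blk (sumMinors K n j) - 1) < j ∧
    j ≤ m (j - degNilradical blk (sumMinors K n j)) :=
  sub_degNilradical_sumMinors_general blk hmono m hm imax himax j hj1 hj2
end

section
/- Let i_1,…,i_s be positive integers with m_i = ∑_{k=1}^s min(i, i_k) and I := {i ∈ {1,…,max i_k} : ∃k, i_k = i}. If i ∈ I and m_i ≠ ∑_k i_k, then m_i − 1 ∉ {m_j : 0 ≤ j ≤ max i_k}; moreover if i ∈ I is such that at least two indices k satisfy i_k = i, then m_i − m_{i−1} ≥ 2. -/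
/-!
The increments of `m j = ∑ k, min j (i k)` are `m (j + 1) - m j = #{k | j < i k}`, so `m` is
monotone, and it jumps by at least `2` from `i₀ - 1` to `i₀` as soon as two indices have
`i k ≥ i₀`. With `i₀ = i k₀` this happens when `i₀` is attained twice, or when some `i k'`
exceeds `i₀`, which is what `m i₀ ≠ ∑ k, i k` means. A monotone sequence jumping by `2` at
`i₀` skips the value `m i₀ - 1`.
-/

open Finset

namespace Finset

variable {ι : Type*} (s : Finset ι) (f : ι → ℕ)

theorem monotone_sum_min : Monotone fun j => ∑ k ∈ s, min j (f k) :=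
  fun _ _ hab => sum_le_sum fun _ _ => min_le_min_right _ hab

theorem sum_min_succ (j : ℕ) :
    ∑ k ∈ s, min (j + 1) (f k) = ∑ k ∈ s, min j (f k) + #{k ∈ s | j < f k} := by
  rw [card_filter, ← sum_add_distrib]
  refine sum_congr rfl fun k _ => ?_
  split_ifs <;> omega

theorem sum_min_add_two_le_sum_min_succ {f : ι → ℕ} {a b : ι} (ha : a ∈ s) (hb : b ∈ s)
    (hab : a ≠ b) {j : ℕ} (hja : j < f a) (hjb : j < f b) :
    ∑ k ∈ s, min j (f k) + 2 ≤ ∑ k ∈ s, min (j + 1) (f k) := by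
  have hcard : 1 < #{k ∈ s | j < f k} :=
    one_lt_card.mpr ⟨a, mem_filter.mpr ⟨ha, hja⟩, b, mem_filter.mpr ⟨hb, hjb⟩, hab⟩
  rw [sum_min_succ]
  omega

theorem sum_min_eq_sum_of_forall_le {j : ℕ} (h : ∀ k ∈ s, f k ≤ j) :
    ∑ k ∈ s, min j (f k) = ∑ k ∈ s, f k :=
  sum_congr rfl fun k hk => min_eq_right (h k hk)

end Finset

theorem Monotone.ne_sub_one_of_add_two_le_succ {m : ℕ → ℕ} (hm : Monotone m) {n : ℕ}
    (hgap : m n + 2 ≤ m (n + 1)) (j : ℕ) : m (n + 1) - 1 ≠ m j := by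
  rcases le_or_gt j n with hjn | hnj
  · have := hm hjn
    omega
  · have := hm (show n + 1 ≤ j from hnj)
    omega

/-- with `m_i = ∑_k min(i, i_k)` and `i₀` an attained value of the `i_k`,
if `m_{i₀} ≠ ∑_k i_k` then `m_{i₀} - 1` is not of the form `m_j` for `j ≤ max i_k`;
moreover if at least two indices `k` satisfy `i_k = i₀`, then `m_{i₀} - m_{i₀-1} ≥ 2`. -/
theorem m_pred_not_attained_and_gap
    {s : ℕ} (i : Fin s → ℕ) (hpos : ∀ k, 0 < i k)
    (m : ℕ → ℕ) (hm : ∀ j, m j = ∑ k, min j (i k))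
    (i₀ : ℕ) (hi₀ : ∃ k, i k = i₀) :
    (m i₀ ≠ ∑ k, i k → ∀ j ≤ Finset.univ.sup i, m i₀ - 1 ≠ m j) ∧
    ((∃ k k' : Fin s, k ≠ k' ∧ i k = i₀ ∧ i k' = i₀) → 2 ≤ m i₀ - m (i₀ - 1)) := by
  obtain ⟨k₀, rfl⟩ := hi₀
  obtain ⟨n, hn⟩ : ∃ n, i k₀ = n + 1 := Nat.exists_eq_add_one.mpr (hpos k₀)
  obtain rfl : m = fun j => ∑ k, min j (i k) := funext hm
  have gap : ∀ a b, a ≠ b → n < i a → n < i b →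
      ∑ k, min n (i k) + 2 ≤ ∑ k, min (n + 1) (i k) := fun a b hab ha hb =>
    sum_min_add_two_le_sum_min_succ univ (mem_univ a) (mem_univ b) hab ha hb
  simp only [hn, Nat.add_sub_cancel]
  constructor
  · intro hne j _
    obtain ⟨k', hk'⟩ : ∃ k', n + 1 < i k' := by
      by_contra! hle
      exact hne (sum_min_eq_sum_of_forall_le univ i fun k _ => hle k)
    have hk₀k' : k₀ ≠ k' := by
      rintro rfl
      omega
    exact (monotone_sum_min univ i).ne_sub_one_of_add_two_le_succ
      (gap k₀ k' hk₀k' (by omega) (by omega)) j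
  · rintro ⟨a, b, hab, ha, hb⟩
    have := gap a b hab (by omega) (by omega)
    omega
end
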